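/- Let G be a group with subgroups H ≤ U ≤ G, and let A ≤ G be a Dedekind subgroup with AH = G. Set J = N_G(H) ∩ A and J₁ = U ∩ A. Then N_G(H) = HJ, U = H J₁, J normalizes U, and hence N_G(H) ≤ N_G(U); in particular N_G(H)·U is a subgroup of G normalizing U. -/

import Mathlib

open scoped Pointwise

/-!
Since `G = AH = HA`, Dedekind's modular law gives `K = H (K ∩ A)` for every subgroup `K ≥ H`;
applied to `K = N_G(H)` and `K = U` this yields the two factorizations. An element of
`J = N_G(H) ∩ A` normalizes `H`, and normalizes `U ∩ A` because `A` is Dedekind, so it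
normalizes `U = H ⊔ (U ∩ A)`. Hence `N_G(H) = H ⊔ J ≤ N_G(U)`, and `N_G(H) U = N_G(H) ⊔ U`.
-/

namespace Subgroup

variable {G : Type*} [Group G]

theorem coe_mul_coe_eq_univ_comm {H K : Subgroup G}
    (h : (H : Set G) * (K : Set G) = Set.univ) : (K : Set G) * (H : Set G) = Set.univ := by
  rw [← inv_coe_set (H := K), ← inv_coe_set (H := H), ← mul_inv_rev, h, Set.inv_univ]

theorem coe_eq_mul_inf_of_mul_eq_univ {H A K : Subgroup G}
    (hHA : (H : Set G) * (A : Set G) = Set.univ) (hHK : H ≤ K) : (K : Set G) = H * ↑(K ⊓ A) := by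
  rw [inf_comm, mul_inf_assoc H A K hHK, hHA, Set.univ_inter]

theorem eq_sup_of_coe_eq_mul {H L K : Subgroup G} (h : (K : Set G) = (H : Set G) * (L : Set G)) :
    K = H ⊔ L := by
  refine le_antisymm (fun k hk => ?_) (sup_le (fun x hx => ?_) (fun x hx => ?_))
  · rw [← SetLike.mem_coe, h] at hk
    obtain ⟨x, hx, y, hy, rfl⟩ := hk
    exact mul_mem (mem_sup_left hx) (mem_sup_right hy)
  · rw [← SetLike.mem_coe, h]
    exact ⟨x, hx, 1, one_mem L, mul_one x⟩
  · rw [← SetLike.mem_coe, h]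
    exact ⟨1, one_mem H, x, hx, one_mul x⟩

end Subgroup

open Subgroup

/-- If `A` is a Dedekind subgroup with `AH = G` and `H ≤ U`, then with
`J = N_G(H) ⊓ A` and `J₁ = U ⊓ A` we have `N_G(H) = HJ`, `U = HJ₁`, `J`
normalizes `U`, `N_G(H) ≤ N_G(U)`, and `N_G(H)·U` is a subgroup of `G`
normalizing `U`. -/
theorem stmt_16 {G : Type*} [Group G] (H A U : Subgroup G)
    (hAH : (A : Set G) * (H : Set G) = Set.univ)
    (hDed : ∀ J : Subgroup G, J ≤ A → (J.subgroupOf A).Normal)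
    (hHU : H ≤ U) :
    (Subgroup.normalizer (H : Set G) : Set G) = (H : Set G) * ((Subgroup.normalizer (H : Set G) ⊓ A : Subgroup G) : Set G) ∧
    (U : Set G) = (H : Set G) * ((U ⊓ A : Subgroup G) : Set G) ∧
    Subgroup.normalizer (H : Set G) ⊓ A ≤ Subgroup.normalizer (U : Set G) ∧
    Subgroup.normalizer (H : Set G) ≤ Subgroup.normalizer (U : Set G) ∧
    ∃ W : Subgroup G, (W : Set G) = (Subgroup.normalizer (H : Set G) : Set G) * (U : Set G) ∧
      W ≤ Subgroup.normalizer (U : Set G) := by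
  have hHA := coe_mul_coe_eq_univ_comm hAH
  have hN := coe_eq_mul_inf_of_mul_eq_univ hHA H.le_normalizer
  have hU := coe_eq_mul_inf_of_mul_eq_univ hHA hHU
  have hJ : normalizer (H : Set G) ⊓ A ≤ normalizer (U : Set G) := by
    have hA : A ≤ normalizer ((U ⊓ A : Subgroup G) : Set G) :=
      (normal_subgroupOf_iff_le_normalizer inf_le_right).mp (hDed _ inf_le_right)
    rw [eq_sup_of_coe_eq_mul hU]
    exact (inf_le_inf_left _ hA).trans (normalizer_inf_normalizer_le_normalizer_sup _ _)
  have hNU : normalizer (H : Set G) ≤ normalizer (U : Set G) := by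
    rw [eq_sup_of_coe_eq_mul hN]
    exact sup_le (hHU.trans le_normalizer) hJ
  exact ⟨hN, hU, hJ, hNU, normalizer (H : Set G) ⊔ U,
    coe_mul_of_left_le_normalizer_right _ _ hNU, sup_le hNU le_normalizer⟩
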